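/- The wealth-dependent dynamic optimal risk sharing problem y_t((H^a_t)_{a∈𝔸}) = sup { Σ_{a∈𝔸} u_t(H^a_t,·)∘u_{t+1}(x^a_{t+1},·)∘…∘u_{T-1}(x^a_{T-1}, x^a_T) : Σ_{a∈𝔸} x^a_s = H_s, x^a_s ∈ L⁰_{s,++}, s = t+1,…,T } admits the optimal solution x^{a,*}_s = (H^a_t / H_t)·H_s for a ∈ 𝔸 and s = t+1,…,T; moreover the function y_t : L⁰_t((0,∞)^{|𝔸|}) → L̲⁰_t is 𝓕_t-stable, increasing and sequentially upper semi-continuous for t = 0,…,T. -/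

import Mathlib

/-!
The one-period utility `u_t(x, y) = x · g_t(y / x)` is the perspective of `g_t`: it is positively
homogeneous, increasing in `y`, and, by `𝓕_t`-concavity of `g_t`, superadditive,
`u_t(x, y) + u_t(x', y') ≤ u_t(x + x', y + y')`. Backward induction with superadditivity and
monotonicity bounds the total utility of any feasible allocation by the utility of a
representative agent owning the aggregate endowment, and homogeneity shows that the proportional
allocation attains this bound. Hence `y_t(h) = u_t(∑ₐ hᵃ, V_{t+1})` with `V_{t+1}` the
representative agent's utility from `t + 1` on, and the properties of `y_t` reduce to properties
of `x ↦ x · g_t(V / x)`: locality of `g_t` (concavity with an indicator as weight),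
`g_t(λ y) ≥ λ g_t(y)` (concavity and `g_t(0) = 0`), and upper semicontinuity of `g_t`.
-/

open MeasureTheory Filter Topology Set

namespace CondPaper

variable {Ω : Type*}

/-- A countable partition of `Ω` (up to `μ`-null sets) into `G`-measurable sets. -/
def IsCondPartition {_ : MeasurableSpace Ω} (μ : Measure Ω) (G : MeasurableSpace Ω)
    (A : ℕ → Set Ω) : Prop :=
  (∀ k, MeasurableSet[G] (A k)) ∧
    (∀ i j, i ≠ j → μ (A i ∩ A j) = 0) ∧ μ (⋃ k, A k)ᶜ = 0

/-- A `G`-conditional metric on a nonempty set `X` (Definition 2.1 of the paper). -/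
structure CondMetric {_ : MeasurableSpace Ω} (μ : Measure Ω) (G : MeasurableSpace Ω)
    (X : Type*) : Type _ where
  d : X → X → Ω → ℝ
  measurable_d : ∀ x y, Measurable[G] (d x y)
  nonneg : ∀ x y, ∀ᵐ ω ∂μ, 0 ≤ d x y ω
  eq_iff : ∀ x y, (d x y =ᵐ[μ] fun _ => (0 : ℝ)) ↔ x = y
  symm : ∀ x y, d x y =ᵐ[μ] d y x
  triangle : ∀ x y z, ∀ᵐ ω ∂μ, d x z ω ≤ d x y ω + d y z ω
  concat_spec : ∀ (A : ℕ → Set Ω), IsCondPartition μ G A → ∀ x : ℕ → X,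
    ∃! x₀ : X, ∀ k, ∀ᵐ ω ∂μ, ω ∈ A k → d x₀ (x k) ω = 0

namespace CondMetric

variable {m : MeasurableSpace Ω} {μ : Measure Ω} {G : MeasurableSpace Ω} {X Z : Type*}

/-- The concatenation `Σₖ 1_{A k} (x k)` along a partition. -/
noncomputable def concat (D : CondMetric μ G X) (A : ℕ → Set Ω)
    (hA : IsCondPartition μ G A) (x : ℕ → X) : X :=
  (D.concat_spec A hA x).choose

/-- Almost sure convergence `x n → x₀` in a conditional metric space. -/
def TendstoAE (D : CondMetric μ G X) (x : ℕ → X) (x₀ : X) : Prop :=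
  ∀ᵐ ω ∂μ, Tendsto (fun n => D.d x₀ (x n) ω) atTop (nhds (0 : ℝ))

lemma isCondPartition_level {n : Ω → ℕ} (hn : Measurable[G] n) (μ : @Measure Ω m) :
    IsCondPartition μ G fun j => {ω | n ω = j} := by
  refine ⟨fun j => hn (MeasurableSet.singleton j), ?_, ?_⟩
  · intro i j hij
    have h : {ω | n ω = i} ∩ {ω | n ω = j} = (∅ : Set Ω) := by
      ext ω
      simp only [Set.mem_inter_iff, Set.mem_setOf_eq, Set.mem_empty_iff_false, iff_false]
      rintro ⟨h1, h2⟩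
      exact hij (h1 ▸ h2 ▸ rfl)
    simp [h]
  · have h : (⋃ j, {ω | n ω = j}) = (Set.univ : Set Ω) := by
      ext ω; simp
    simp [h]

/-- Given a `G`-measurable index `n : Ω → ℕ`, the element `x_{n}` of the
"measurable subsequence", i.e. the concatenation of `(x j)` along `({n = j})_j`. -/
noncomputable def subseq (D : CondMetric μ G X) (x : ℕ → X) (n : Ω → ℕ)
    (hn : Measurable[G] n) : X :=
  D.concat (fun j => {ω | n ω = j}) (isCondPartition_level hn μ) x

end CondMetric

variable {m : MeasurableSpace Ω} {μ : Measure Ω} {G : MeasurableSpace Ω} {X Z : Type*}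

/-- A strictly increasing sequence `n₁ < n₂ < ⋯` of `G`-measurable `ℕ`-valued random
variables (indexing a measurable subsequence). -/
structure MIdx {_ : MeasurableSpace Ω} (μ : Measure Ω) (G : MeasurableSpace Ω) where
  n : ℕ → Ω → ℕ
  meas : ∀ k, Measurable[G] (n k)
  lt : ∀ k, ∀ᵐ ω ∂μ, n k ω < n (k + 1) ω

/-- A `G`-stable subset: nonempty and closed under countable concatenations. -/
def StableSet (D : CondMetric μ G X) (H : Set X) : Prop :=
  H.Nonempty ∧ ∀ (A : ℕ → Set Ω) (hA : IsCondPartition μ G A) (x : ℕ → X),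
    (∀ k, x k ∈ H) → D.concat A hA x ∈ H

/-- A sequentially closed subset of a conditional metric space. -/
def SeqClosedSet (D : CondMetric μ G X) (H : Set X) : Prop :=
  ∀ (x : ℕ → X) (x₀ : X), (∀ k, x k ∈ H) → D.TendstoAE x x₀ → x₀ ∈ H

/-- Conditional sequential compactness: every sequence has a measurable
subsequence converging a.s. to an element of `K`. -/
def CondSeqCompact (D : CondMetric μ G X) (K : Set X) : Prop :=
  ∀ z : ℕ → X, (∀ k, z k ∈ K) →
    ∃ (N : MIdx μ G) (z₀ : X), z₀ ∈ K ∧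
      D.TendstoAE (fun k => D.subseq z (N.n k) (N.meas k)) z₀

/-- Condition (c1): nonempty control sets. -/
def ControlC1 (Θ : X → Set Z) : Prop := ∀ x, (Θ x).Nonempty

/-- Condition (c2): `𝓕ₜ`-stability of the state-dependent control set. -/
def ControlC2 (DX : CondMetric μ G X) (DZ : CondMetric μ G Z) (Θ : X → Set Z) : Prop :=
  ∀ (A : ℕ → Set Ω) (hA : IsCondPartition μ G A) (x : ℕ → X),
    Θ (DX.concat A hA x) =
      {w | ∃ z : ℕ → Z, (∀ k, z k ∈ Θ (x k)) ∧ w = DZ.concat A hA z}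

/-- Condition (c3): conditional sequential compactness of each control set. -/
def ControlC3 (DZ : CondMetric μ G Z) (Θ : X → Set Z) : Prop :=
  ∀ x, CondSeqCompact DZ (Θ x)

/-- Condition (c4): conditional outer semi-continuity of the control set. -/
def ControlC4 (DX : CondMetric μ G X) (DZ : CondMetric μ G Z) (Θ : X → Set Z) : Prop :=
  ∀ (x : ℕ → X) (x₀ : X), DX.TendstoAE x x₀ → ∀ z : ℕ → Z, (∀ n, z n ∈ Θ (x n)) →
    ∃ (N : MIdx μ G) (z' : ℕ → Z), (∀ k, z' k ∈ Θ x₀) ∧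
      ∀ᵐ ω ∂μ, Tendsto
        (fun k => DZ.d (DZ.subseq z (N.n k) (N.meas k)) (z' k) ω) atTop (nhds (0 : ℝ))

/-- Membership in `L̲⁰(G)`: a `G`-measurable random variable with values in `ℝ ∪ {-∞}`. -/
def InLbar {_ : MeasurableSpace Ω} (μ : Measure Ω) (G : MeasurableSpace Ω)
    (y : Ω → EReal) : Prop :=
  Measurable[G] y ∧ ∀ᵐ ω ∂μ, y ω < ⊤

end CondPaper

namespace CondPaper

variable {Ω ι : Type*}

/-- The recursively defined utility of an agent with wealth process `w · a`:
`shareVal g T w k a` is `u_{T-k}(w_{T-k} a, ·) ∘ ⋯ ∘ u_{T-1}(w_{T-1} a, w_T a)` where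
`u_s(x,y) = x · g_s(y/x)` and `u_T = id`. -/
noncomputable def shareVal (g : ℕ → (Ω → EReal) → Ω → EReal) (T : ℕ) (w : ℕ → ι → Ω → ℝ) :
    ℕ → ι → Ω → EReal
  | 0 => fun a ω => ((w T a ω : ℝ) : EReal)
  | k + 1 => fun a ω => ((w (T - (k + 1)) a ω : ℝ) : EReal) *
      g (T - (k + 1))
        (fun ω' => (((w (T - (k + 1)) a ω')⁻¹ : ℝ) : EReal) * shareVal g T w k a ω') ω

/-- A feasible allocation of the aggregate endowment `(H_s)` for times `s = t+1, …, T`: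
positive, adapted, and summing to `H_s`. -/
def IsAlloc [Fintype ι] {_ : MeasurableSpace Ω} (μ : Measure Ω)
    (F : ℕ → MeasurableSpace Ω) (T t : ℕ) (Hagg : ℕ → Ω → ℝ)
    (x : ℕ → ι → Ω → ℝ) : Prop :=
  ∀ s, t < s → s ≤ T →
    (∀ a, Measurable[F s] (x s a) ∧ ∀ᵐ ω ∂μ, 0 < x s a ω) ∧
    (fun ω => ∑ a, x s a ω) =ᵐ[μ] Hagg s


end CondPaper

namespace EReal

lemma coe_finset_sum {ι : Type*} (s : Finset ι) (f : ι → ℝ) :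
    ((∑ a ∈ s, f a : ℝ) : EReal) = ∑ a ∈ s, (f a : EReal) :=
  map_sum (⟨⟨Real.toEReal, coe_zero⟩, coe_add⟩ : ℝ →+ EReal) f s

lemma coe_finset_sum_mul_of_nonneg {ι : Type*} (s : Finset ι) {f : ι → ℝ}
    (hf : ∀ a ∈ s, 0 ≤ f a) (x : EReal) :
    ((∑ a ∈ s, f a : ℝ) : EReal) * x = ∑ a ∈ s, (f a : EReal) * x := by
  induction s using Finset.cons_induction with
  | empty => simp
  | cons a s ha ih =>
    rw [Finset.forall_mem_cons] at hf
    rw [Finset.sum_cons, Finset.sum_cons, coe_add, right_distrib_of_nonneg (EReal.coe_nonneg.2 hf.1)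
      (EReal.coe_nonneg.2 (Finset.sum_nonneg hf.2)), ih hf.2]

lemma tendsto_coe_mul_const {r : ℕ → ℝ} {r₀ : ℝ} (hr : Tendsto r atTop (𝓝 r₀)) (hr₀ : r₀ ≠ 0)
    (v : EReal) : Tendsto (fun k => (r k : EReal) * v) atTop (𝓝 ((r₀ : EReal) * v)) := by
  have h₀ : (r₀ : EReal) ≠ 0 := by exact_mod_cast hr₀
  exact (continuousAt_mul (.inl h₀) (.inl h₀) (.inl (coe_ne_bot r₀))
    (.inl (coe_ne_top r₀))).tendsto.comp ((tendsto_coe.2 hr).prodMk_nhds tendsto_const_nhds)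

lemma limsup_coe_mul_le {r : ℕ → ℝ} {r₀ : ℝ} (hr : Tendsto r atTop (𝓝 r₀)) (hr₀ : 0 < r₀)
    (hr_nonneg : ∀ k, 0 ≤ r k) {u : ℕ → EReal} {L : EReal} (hu : limsup u atTop ≤ L) :
    limsup (fun k => (r k : EReal) * u k) atTop ≤ r₀ * L := by
  refine le_of_forall_lt_iff_le.1 fun z hz => ?_
  have hL : L < ((z / r₀ : ℝ) : EReal) := by
    by_contra! h
    have := mul_le_mul_of_nonneg_left h (EReal.coe_nonneg.2 hr₀.le)
    rw [← coe_mul, mul_div_cancel₀ _ hr₀.ne'] at this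
    exact this.not_gt hz
  calc limsup (fun k => (r k : EReal) * u k) atTop
      ≤ limsup (fun k => ((r k * (z / r₀) : ℝ) : EReal)) atTop := by
        refine limsup_le_limsup ((eventually_lt_of_limsup_lt (hu.trans_lt hL)).mono fun k hk => ?_)
        show (r k : EReal) * u k ≤ ((r k * (z / r₀) : ℝ) : EReal)
        rw [coe_mul]
        exact mul_le_mul_of_nonneg_left hk.le (EReal.coe_nonneg.2 (hr_nonneg k))
    _ = z := by
        refine Tendsto.limsup_eq (tendsto_coe.2 ?_)
        simpa [mul_div_cancel₀ _ hr₀.ne'] using hr.mul_const (z / r₀)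

end EReal

namespace CondPaper

variable {Ω ι : Type*}

section LZero

variable {m : MeasurableSpace Ω} {μ : Measure Ω} {G G' : MeasurableSpace Ω}

/-- Membership in `L⁰_{++}(G)`. -/
def InLpp (μ : Measure Ω) (G : MeasurableSpace Ω) (x : Ω → ℝ) : Prop :=
  Measurable[G] x ∧ ∀ᵐ ω ∂μ, 0 < x ω

lemma InLpp.sum {s : Finset ι} (hs : s.Nonempty) {x : ι → Ω → ℝ} (hx : ∀ a ∈ s, InLpp μ G (x a)) :
    InLpp μ G fun ω => ∑ a ∈ s, x a ω :=
  ⟨Finset.measurable_sum s fun a ha => (hx a ha).1,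
    (eventually_all_finset s).2 (fun a ha => (hx a ha).2) |>.mono fun _ h => Finset.sum_pos h hs⟩

lemma InLbar.coe_mul {r : Ω → ℝ} {Z : Ω → EReal} (hr : Measurable[G] r)
    (hr_nonneg : ∀ᵐ ω ∂μ, 0 ≤ r ω) (hZ : InLbar μ G Z) :
    InLbar μ G fun ω => (r ω : EReal) * Z ω := by
  refine ⟨(measurable_coe_real_ereal.comp hr).mul hZ.1, ?_⟩
  filter_upwards [hr_nonneg, hZ.2] with ω hr hZ
  exact lt_top_iff_ne_top.2 ((EReal.mul_ne_top _ _).2 ⟨.inl (EReal.coe_ne_bot _),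
    .inl (EReal.coe_nonneg.2 hr), .inl (EReal.coe_ne_top _), .inr hZ.ne⟩)

lemma InLbar.inv_mul {x : Ω → ℝ} {Z : Ω → EReal} (hZ : InLbar μ G' Z) (hx : InLpp μ G x)
    (hGG' : G ≤ G') : InLbar μ G' fun ω => (((x ω)⁻¹ : ℝ) : EReal) * Z ω :=
  hZ.coe_mul (hx.1.inv.mono hGG' le_rfl) (hx.2.mono fun _ h => inv_nonneg.2 h.le)

lemma InLbar.sum {s : Finset ι} {Z : ι → Ω → EReal} (hZ : ∀ a ∈ s, InLbar μ G (Z a)) :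
    InLbar μ G fun ω => ∑ a ∈ s, Z a ω := by
  refine ⟨Finset.measurable_sum s fun a ha => (hZ a ha).1, ?_⟩
  filter_upwards [(eventually_all_finset s).2 fun a ha => (hZ a ha).2] with ω h
  clear hZ
  induction s using Finset.cons_induction with
  | empty => simp
  | cons a s ha ih =>
    rw [Finset.forall_mem_cons] at h
    rw [Finset.sum_cons]
    exact EReal.add_lt_top h.1.ne (ih h.2).ne

end LZero

section Perspective

variable {m : MeasurableSpace Ω} (μ : Measure Ω) (G G' : MeasurableSpace Ω)

def MapsLbar (g : (Ω → EReal) → Ω → EReal) : Prop :=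
  ∀ y, InLbar μ G' y → InLbar μ G (g y)

def AECongr (g : (Ω → EReal) → Ω → EReal) : Prop :=
  ∀ y y', y =ᵐ[μ] y' → g y =ᵐ[μ] g y'

def MonotoneOnLbar (g : (Ω → EReal) → Ω → EReal) : Prop :=
  ∀ y y', InLbar μ G' y → InLbar μ G' y' → y ≤ᵐ[μ] y' → g y ≤ᵐ[μ] g y'

def CondConcave (g : (Ω → EReal) → Ω → EReal) : Prop :=
  ∀ y y', InLbar μ G' y → InLbar μ G' y' →
    ∀ lam : Ω → ℝ, Measurable[G] lam → (∀ᵐ ω ∂μ, 0 ≤ lam ω ∧ lam ω ≤ 1) →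
    ∀ᵐ ω ∂μ, (lam ω : EReal) * g y ω + ((1 - lam ω : ℝ) : EReal) * g y' ω ≤
      g (fun ω' => (lam ω' : EReal) * y ω' + ((1 - lam ω' : ℝ) : EReal) * y' ω') ω

def SeqUSCOnLbar (g : (Ω → EReal) → Ω → EReal) : Prop :=
  ∀ (yk : ℕ → Ω → EReal) (y₀ : Ω → EReal), (∀ k, InLbar μ G' (yk k)) → InLbar μ G' y₀ →
    (∀ᵐ ω ∂μ, Tendsto (fun k => yk k ω) atTop (𝓝 (y₀ ω))) →
    ∀ᵐ ω ∂μ, limsup (fun k => g (yk k) ω) atTop ≤ g y₀ ω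

/-- The perspective `x · g(Z / x)` of `g`; the one-period utility is `u_t = persp (g t)`. -/
noncomputable def persp (g : (Ω → EReal) → Ω → EReal) (x : Ω → ℝ) (Z : Ω → EReal) : Ω → EReal :=
  fun ω => (x ω : EReal) * g (fun ω' => (((x ω')⁻¹ : ℝ) : EReal) * Z ω') ω

variable {μ G G'} {g : (Ω → EReal) → Ω → EReal} {x x' : Ω → ℝ} {Z Z' : Ω → EReal}

lemma inLbar_persp (hg : MapsLbar μ G G' g) (hGG' : G ≤ G') (hx : InLpp μ G x)
    (hZ : InLbar μ G' Z) : InLbar μ G (persp g x Z) :=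
  (hg _ (hZ.inv_mul hx hGG')).coe_mul hx.1 (hx.2.mono fun _ h => h.le)

lemma persp_congr_ae (hg : AECongr μ g) (hx : x =ᵐ[μ] x') (hZ : Z =ᵐ[μ] Z') :
    persp g x Z =ᵐ[μ] persp g x' Z' := by
  have harg : (fun ω => (((x ω)⁻¹ : ℝ) : EReal) * Z ω) =ᵐ[μ]
      fun ω => (((x' ω)⁻¹ : ℝ) : EReal) * Z' ω := by
    filter_upwards [hx, hZ] with ω h1 h2
    rw [h1, h2]
  filter_upwards [hx, hg _ _ harg] with ω h1 h2
  simp only [persp]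
  rw [h1, h2]

lemma persp_mul_ae (hg : AECongr μ g) {c : Ω → ℝ} (hc : ∀ᵐ ω ∂μ, c ω ≠ 0) :
    persp g (fun ω => c ω * x ω) (fun ω => (c ω : EReal) * Z ω) =ᵐ[μ]
      fun ω => (c ω : EReal) * persp g x Z ω := by
  have harg : (fun ω => (((c ω * x ω)⁻¹ : ℝ) : EReal) * ((c ω : EReal) * Z ω)) =ᵐ[μ]
      fun ω => (((x ω)⁻¹ : ℝ) : EReal) * Z ω := by
    filter_upwards [hc] with ω hc
    rw [← mul_assoc, ← EReal.coe_mul, mul_inv, mul_right_comm, inv_mul_cancel₀ hc, one_mul]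
  filter_upwards [hg _ _ harg] with ω h
  simp only [persp]
  rw [h, EReal.coe_mul, mul_assoc]

lemma persp_add_le (hconc : CondConcave μ G G' g) (hg : AECongr μ g) (hGG' : G ≤ G')
    (hx : InLpp μ G x) (hx' : InLpp μ G x') (hZ : InLbar μ G' Z) (hZ' : InLbar μ G' Z') :
    (fun ω => persp g x Z ω + persp g x' Z' ω) ≤ᵐ[μ]
      persp g (fun ω => x ω + x' ω) (fun ω => Z ω + Z' ω) := by
  set lam : Ω → ℝ := fun ω => x ω / (x ω + x' ω)
  have hlam : ∀ᵐ ω ∂μ, lam ω * (x ω)⁻¹ = (x ω + x' ω)⁻¹ ∧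
      (1 - lam ω) * (x' ω)⁻¹ = (x ω + x' ω)⁻¹ ∧
      (x ω + x' ω) * lam ω = x ω ∧ (x ω + x' ω) * (1 - lam ω) = x' ω := by
    filter_upwards [hx.2, hx'.2] with ω h h'
    have : x ω + x' ω ≠ 0 := by positivity
    simp only [lam]
    refine ⟨?_, ?_, ?_, ?_⟩ <;> field_simp <;> ring
  have hlam01 : ∀ᵐ ω ∂μ, 0 ≤ lam ω ∧ lam ω ≤ 1 := by
    filter_upwards [hx.2, hx'.2] with ω h h'
    exact ⟨by positivity, (div_le_one (by positivity)).2 (by linarith)⟩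
  -- mixing `Z / x` and `Z' / x'` with weight `x / (x + x')` gives `(Z + Z') / (x + x')`
  have hmix : (fun ω => (lam ω : EReal) * ((((x ω)⁻¹ : ℝ) : EReal) * Z ω) +
        ((1 - lam ω : ℝ) : EReal) * ((((x' ω)⁻¹ : ℝ) : EReal) * Z' ω)) =ᵐ[μ]
      fun ω => (((x ω + x' ω)⁻¹ : ℝ) : EReal) * (Z ω + Z' ω) := by
    filter_upwards [hlam, hx.2, hx'.2] with ω hlam h h'
    obtain ⟨h1, h2, -, -⟩ := hlam
    rw [← mul_assoc, ← mul_assoc, ← EReal.coe_mul, ← EReal.coe_mul, h1, h2,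
      EReal.left_distrib_of_nonneg_of_ne_top (EReal.coe_nonneg.2 (by positivity))
        (EReal.coe_ne_top _)]
  filter_upwards [hconc _ _ (hZ.inv_mul hx hGG') (hZ'.inv_mul hx' hGG') lam
    (hx.1.div (hx.1.add hx'.1)) hlam01, hg _ _ hmix, hlam, hx.2, hx'.2]
    with ω hc hgmix hlam h h'
  obtain ⟨-, -, h3, h4⟩ := hlam
  rw [hgmix] at hc
  refine (le_of_eq ?_).trans (mul_le_mul_of_nonneg_left hc (EReal.coe_nonneg.2 (by positivity)))
  rw [EReal.left_distrib_of_nonneg_of_ne_top (EReal.coe_nonneg.2 (by positivity))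
    (EReal.coe_ne_top _), ← mul_assoc, ← mul_assoc, ← EReal.coe_mul, ← EReal.coe_mul, h3, h4]
  rfl

lemma persp_sum_le (hconc : CondConcave μ G G' g) (hg : AECongr μ g) (hGG' : G ≤ G')
    {s : Finset ι} (hs : s.Nonempty) {x : ι → Ω → ℝ} {Z : ι → Ω → EReal}
    (hx : ∀ a ∈ s, InLpp μ G (x a)) (hZ : ∀ a ∈ s, InLbar μ G' (Z a)) :
    (fun ω => ∑ a ∈ s, persp g (x a) (Z a) ω) ≤ᵐ[μ]
      persp g (fun ω => ∑ a ∈ s, x a ω) (fun ω => ∑ a ∈ s, Z a ω) := by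
  induction hs using Finset.Nonempty.cons_induction with
  | singleton a => simp only [Finset.sum_singleton]; rfl
  | cons a s ha hs ih =>
    rw [Finset.forall_mem_cons] at hx hZ
    filter_upwards [ih hx.2 hZ.2, persp_add_le hconc hg hGG' hx.1 (InLpp.sum hs hx.2) hZ.1
      (InLbar.sum hZ.2)] with ω h1 h2
    simp only [Finset.sum_cons]
    exact (add_le_add le_rfl h1).trans h2

lemma persp_mono_right (hmono : MonotoneOnLbar μ G' g) (hGG' : G ≤ G') (hx : InLpp μ G x)
    (hZ : InLbar μ G' Z) (hZ' : InLbar μ G' Z') (hle : Z ≤ᵐ[μ] Z') :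
    persp g x Z ≤ᵐ[μ] persp g x Z' := by
  have harg : (fun ω => (((x ω)⁻¹ : ℝ) : EReal) * Z ω) ≤ᵐ[μ]
      fun ω => (((x ω)⁻¹ : ℝ) : EReal) * Z' ω := by
    filter_upwards [hle, hx.2] with ω h hxω
    exact mul_le_mul_of_nonneg_left h (EReal.coe_nonneg.2 (inv_nonneg.2 hxω.le))
  filter_upwards [hmono _ _ (hZ.inv_mul hx hGG') (hZ'.inv_mul hx hGG') harg, hx.2] with ω h hxω
  exact mul_le_mul_of_nonneg_left h (EReal.coe_nonneg.2 hxω.le)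

lemma persp_mono_left (hconc : CondConcave μ G G' g) (hg : AECongr μ g)
    (hg0 : g (fun _ => 0) =ᵐ[μ] fun _ => 0) (hGG' : G ≤ G') (hx : InLpp μ G x)
    (hx' : InLpp μ G x') (hle : x ≤ᵐ[μ] x') (hZ : InLbar μ G' Z) :
    persp g x Z ≤ᵐ[μ] persp g x' Z := by
  have hlam01 : ∀ᵐ ω ∂μ, 0 ≤ x ω / x' ω ∧ x ω / x' ω ≤ 1 := by
    filter_upwards [hx.2, hx'.2, hle] with ω h h' hle
    exact ⟨by positivity, (div_le_one h').2 hle⟩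
  -- mixing `Z / x` and `0` with weight `x / x'` gives `Z / x'`
  have hmix : (fun ω => ((x ω / x' ω : ℝ) : EReal) * ((((x ω)⁻¹ : ℝ) : EReal) * Z ω) +
        ((1 - x ω / x' ω : ℝ) : EReal) * 0) =ᵐ[μ]
      fun ω => (((x' ω)⁻¹ : ℝ) : EReal) * Z ω := by
    filter_upwards [hx.2] with ω h
    rw [mul_zero, add_zero, ← mul_assoc, ← EReal.coe_mul, div_mul_eq_mul_div,
      mul_inv_cancel₀ h.ne', one_div]
  have h0 : InLbar μ G' fun _ => 0 := ⟨measurable_const, ae_of_all _ fun _ => EReal.zero_lt_top⟩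
  filter_upwards [hconc _ _ (hZ.inv_mul hx hGG') h0 (fun ω => x ω / x' ω) (hx.1.div hx'.1) hlam01,
    hg _ _ hmix, hg0, hx'.2] with ω hc hgmix hg0 h'
  rw [hg0, mul_zero, add_zero, hgmix] at hc
  refine (le_of_eq ?_).trans (mul_le_mul_of_nonneg_left hc (EReal.coe_nonneg.2 h'.le))
  rw [← mul_assoc, ← EReal.coe_mul, mul_div_cancel₀ _ h'.ne']
  rfl

lemma CondConcave.ae_le_of_eqOn (hconc : CondConcave μ G G' g) (hg : AECongr μ g)
    {B : Set Ω} (hB : MeasurableSet[G] B) {y y' : Ω → EReal} (hy : InLbar μ G' y)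
    (hy' : InLbar μ G' y') (heq : ∀ᵐ ω ∂μ, ω ∈ B → y ω = y' ω) :
    ∀ᵐ ω ∂μ, ω ∈ B → g y ω ≤ g y' ω := by
  classical
  have hmix : (fun ω => ((B.indicator 1 ω : ℝ) : EReal) * y ω +
      ((1 - B.indicator 1 ω : ℝ) : EReal) * y' ω) =ᵐ[μ] y' := by
    filter_upwards [heq] with ω h
    by_cases hω : ω ∈ B <;> simp [hω, h]
  filter_upwards [hconc y y' hy hy' (B.indicator 1) (measurable_const.indicator hB)
    (ae_of_all _ fun ω => ⟨Set.indicator_nonneg (fun _ _ => zero_le_one) ω,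
      Set.indicator_le_self' (fun _ _ => zero_le_one) ω⟩), hg _ _ hmix] with ω hc hgmix hω
  rw [hgmix] at hc
  simpa [hω] using hc

lemma persp_ae_eq_on (hconc : CondConcave μ G G' g) (hg : AECongr μ g) (hGG' : G ≤ G')
    {B : Set Ω} (hB : MeasurableSet[G] B) (hx : InLpp μ G x) (hx' : InLpp μ G x')
    (hZ : InLbar μ G' Z) (heq : ∀ᵐ ω ∂μ, ω ∈ B → x ω = x' ω) :
    ∀ᵐ ω ∂μ, ω ∈ B → persp g x Z ω = persp g x' Z ω := by
  have harg : ∀ᵐ ω ∂μ, ω ∈ B → (((x ω)⁻¹ : ℝ) : EReal) * Z ω = (((x' ω)⁻¹ : ℝ) : EReal) * Z ω :=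
    heq.mono fun ω h hω => by rw [h hω]
  have hy := hZ.inv_mul hx hGG'
  have hy' := hZ.inv_mul hx' hGG'
  filter_upwards [heq, hconc.ae_le_of_eqOn hg hB hy hy' harg,
    hconc.ae_le_of_eqOn hg hB hy' hy (harg.mono fun ω h hω => (h hω).symm)] with ω h h1 h2 hω
  simp only [persp]
  rw [h hω, le_antisymm (h1 hω) (h2 hω)]

lemma limsup_persp_le (husc : SeqUSCOnLbar μ G' g) (hGG' : G ≤ G') {xk : ℕ → Ω → ℝ}
    (hxk : ∀ k, InLpp μ G (xk k)) (hx : InLpp μ G x) (hZ : InLbar μ G' Z)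
    (hlim : ∀ᵐ ω ∂μ, Tendsto (fun k => xk k ω) atTop (𝓝 (x ω))) :
    ∀ᵐ ω ∂μ, limsup (fun k => persp g (xk k) Z ω) atTop ≤ persp g x Z ω := by
  have harg : ∀ᵐ ω ∂μ, Tendsto (fun k => (((xk k ω)⁻¹ : ℝ) : EReal) * Z ω) atTop
      (𝓝 ((((x ω)⁻¹ : ℝ) : EReal) * Z ω)) := by
    filter_upwards [hlim, hx.2] with ω h hxω
    exact EReal.tendsto_coe_mul_const (h.inv₀ hxω.ne') (inv_ne_zero hxω.ne') _
  filter_upwards [husc _ _ (fun k => hZ.inv_mul (hxk k) hGG') (hZ.inv_mul hx hGG') harg, hlim,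
    hx.2, ae_all_iff.2 fun k => (hxk k).2] with ω h1 h2 h3 h4
  exact EReal.limsup_coe_mul_le h2 h3 (fun k => (h4 k).le) h1

end Perspective

lemma ae_eq_of_essSup_attained {m : MeasurableSpace Ω} {μ : Measure Ω} {G : MeasurableSpace Ω}
    {α : Type*} {P : α → Prop} {J : α → Ω → EReal} {y v : Ω → EReal} (hy : ∀ x, P x → J x ≤ᵐ[μ] y)
    (hy_le : ∀ b : Ω → EReal, Measurable[G] b → (∀ x, P x → J x ≤ᵐ[μ] b) → y ≤ᵐ[μ] b)
    (hv : Measurable[G] v) (hv_ub : ∀ x, P x → J x ≤ᵐ[μ] v) {x₀ : α} (hx₀ : P x₀)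
    (hJx₀ : v ≤ᵐ[μ] J x₀) : y =ᵐ[μ] v :=
  (hy_le v hv hv_ub).antisymm (hJx₀.trans (hy x₀ hx₀))

section RiskSharing

variable {m : MeasurableSpace Ω} {μ : Measure Ω} {F : ℕ → MeasurableSpace Ω} {T : ℕ}
  {g : ℕ → (Ω → EReal) → Ω → EReal}

lemma shareVal_zero (w : ℕ → ι → Ω → ℝ) (a : ι) :
    shareVal g T w 0 a = fun ω => (w T a ω : EReal) := rfl

lemma shareVal_succ (w : ℕ → ι → Ω → ℝ) (k : ℕ) (a : ι) :
    shareVal g T w (k + 1) a = persp (g (T - (k + 1))) (w (T - (k + 1)) a) (shareVal g T w k a) :=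
  rfl

lemma shareVal_sub_of_lt {t : ℕ} (ht : t < T) (w : ℕ → ι → Ω → ℝ) (a : ι) :
    shareVal g T w (T - t) a = persp (g t) (w t a) (shareVal g T w (T - (t + 1)) a) := by
  obtain ⟨k, hk⟩ : ∃ k, T - t = k + 1 := ⟨T - t - 1, by omega⟩
  rw [hk, shareVal_succ, show T - (k + 1) = t by omega, show T - (t + 1) = k by omega]

lemma shareVal_congr {ι' : Type*} {w : ℕ → ι → Ω → ℝ} {w' : ℕ → ι' → Ω → ℝ} {a : ι} {a' : ι'} :
    ∀ k, (∀ s, T - k ≤ s → w s a = w' s a') → shareVal g T w k a = shareVal g T w' k a'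
  | 0, h => by rw [shareVal_zero, shareVal_zero, h T (Nat.sub_le T 0)]
  | k + 1, h => by
    rw [shareVal_succ, shareVal_succ, h _ le_rfl, shareVal_congr k fun s hs => h s (by omega)]

lemma inLbar_shareVal (hFmono : Monotone F) (hgL : ∀ t < T, MapsLbar μ (F t) (F (t + 1)) (g t))
    {w : ℕ → ι → Ω → ℝ} {a : ι} :
    ∀ k ≤ T, (∀ s, T - k ≤ s → s ≤ T → InLpp μ (F s) (w s a)) →
      InLbar μ (F (T - k)) (shareVal g T w k a)
  | 0, _, hw => ⟨measurable_coe_real_ereal.comp (hw T (by omega) le_rfl).1,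
      ae_of_all _ fun _ => EReal.coe_lt_top _⟩
  | k + 1, hk, hw => by
    have ih := inLbar_shareVal hFmono hgL k (by omega) fun s h1 h2 => hw s (by omega) h2
    rw [show T - k = T - (k + 1) + 1 by omega] at ih
    exact inLbar_persp (hgL _ (by omega)) (hFmono (Nat.le_succ _)) (hw _ le_rfl (by omega)) ih

lemma shareVal_ae_eq_mul {ι' : Type*} (hg : ∀ t < T, AECongr μ (g t)) {w : ℕ → ι → Ω → ℝ}
    {w' : ℕ → ι' → Ω → ℝ} {a : ι} {a' : ι'} {c : Ω → ℝ} (hc : ∀ᵐ ω ∂μ, c ω ≠ 0) :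
    ∀ k ≤ T, (∀ s, T - k ≤ s → s ≤ T → w s a =ᵐ[μ] fun ω => c ω * w' s a' ω) →
      shareVal g T w k a =ᵐ[μ] fun ω => (c ω : EReal) * shareVal g T w' k a' ω
  | 0, _, hw => by
    filter_upwards [hw T (by omega) le_rfl] with ω h
    simp only [shareVal_zero, h, EReal.coe_mul]
  | k + 1, hk, hw => by
    have ih := shareVal_ae_eq_mul hg hc k (by omega) fun s h1 h2 => hw s (by omega) h2
    rw [shareVal_succ, shareVal_succ]
    exact (persp_congr_ae (hg _ (by omega)) (hw _ le_rfl (by omega)) ih).trans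
      (persp_mul_ae (hg _ (by omega)) hc)

lemma sum_shareVal_le [Fintype ι] [Nonempty ι] (hFmono : Monotone F)
    (hgL : ∀ t < T, MapsLbar μ (F t) (F (t + 1)) (g t)) (hgae : ∀ t < T, AECongr μ (g t))
    (hgmono : ∀ t < T, MonotoneOnLbar μ (F (t + 1)) (g t))
    (hgconc : ∀ t < T, CondConcave μ (F t) (F (t + 1)) (g t)) {H : ℕ → Ω → ℝ}
    (hH : ∀ s ≤ T, InLpp μ (F s) (H s)) {w : ℕ → ι → Ω → ℝ} :
    ∀ k ≤ T, (∀ s, T - k ≤ s → s ≤ T →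
        (∀ a, InLpp μ (F s) (w s a)) ∧ (fun ω => ∑ a, w s a ω) =ᵐ[μ] H s) →
      (fun ω => ∑ a, shareVal g T w k a ω) ≤ᵐ[μ] shareVal g T (fun s (_ : Unit) => H s) k ()
  | 0, _, hw => by
    filter_upwards [(hw T (by omega) le_rfl).2] with ω h
    simp only [shareVal_zero, ← EReal.coe_finset_sum, h, le_refl]
  | k + 1, hk, hw => by
    have hT : T - (k + 1) < T := by omega
    have hGG' := hFmono (Nat.le_succ (T - (k + 1)))
    have hTk : T - k = T - (k + 1) + 1 := by omega
    have hwk : ∀ a, InLbar μ (F (T - (k + 1) + 1)) (shareVal g T w k a) := fun a => by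
      rw [← hTk]
      exact inLbar_shareVal hFmono hgL k (by omega) fun s h1 h2 => (hw s (by omega) h2).1 a
    have hHk : InLbar μ (F (T - (k + 1) + 1)) (shareVal g T (fun s (_ : Unit) => H s) k ()) := by
      rw [← hTk]
      exact inLbar_shareVal hFmono hgL k (by omega) fun s _ h2 => hH s h2
    obtain ⟨hws, hsum⟩ := hw _ le_rfl (by omega)
    have ih := sum_shareVal_le hFmono hgL hgae hgmono hgconc hH k (by omega)
      fun s h1 h2 => hw s (by omega) h2
    calc (fun ω => ∑ a, shareVal g T w (k + 1) a ω)
        ≤ᵐ[μ] persp (g (T - (k + 1))) (fun ω => ∑ a, w (T - (k + 1)) a ω)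
          (fun ω => ∑ a, shareVal g T w k a ω) :=
          persp_sum_le (hgconc _ hT) (hgae _ hT) hGG' Finset.univ_nonempty (fun a _ => hws a)
            fun a _ => hwk a
      _ =ᵐ[μ] persp (g (T - (k + 1))) (H (T - (k + 1))) (fun ω => ∑ a, shareVal g T w k a ω) :=
          persp_congr_ae (hgae _ hT) hsum EventuallyEq.rfl
      _ ≤ᵐ[μ] shareVal g T (fun s (_ : Unit) => H s) (k + 1) () :=
          persp_mono_right (hgmono _ hT) hGG' (hH _ (by omega)) (InLbar.sum fun a _ => hwk a)
            hHk ih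

lemma inLbar_shareVal_sub (hFmono : Monotone F)
    (hgL : ∀ t < T, MapsLbar μ (F t) (F (t + 1)) (g t)) {w : ℕ → ι → Ω → ℝ} {a : ι} {t : ℕ}
    (ht : t ≤ T) (hw : ∀ s, t ≤ s → s ≤ T → InLpp μ (F s) (w s a)) :
    InLbar μ (F t) (shareVal g T w (T - t) a) := by
  have := inLbar_shareVal hFmono hgL (T - t) (Nat.sub_le T t) fun s hs hsT => hw s (by omega) hsT
  rwa [Nat.sub_sub_self ht] at this

/-- The representative agent's utility: a single agent (indexed by `Unit`) holding `q` at time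
`t` and the aggregate endowment `H s` at every later time `s`. -/
noncomputable def repValue (g : ℕ → (Ω → EReal) → Ω → EReal) (T t : ℕ) (H : ℕ → Ω → ℝ)
    (q : Ω → ℝ) : Ω → EReal :=
  shareVal g T (fun s (_ : Unit) => if s = t then q else H s) (T - t) ()

lemma repValue_of_lt {t : ℕ} (ht : t < T) (H : ℕ → Ω → ℝ) (q : Ω → ℝ) :
    repValue g T t H q =
      persp (g t) q (shareVal g T (fun s (_ : Unit) => H s) (T - (t + 1)) ()) := by
  rw [repValue, shareVal_sub_of_lt ht, shareVal_congr (w' := fun s (_ : Unit) => H s) (a' := ()) _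
    fun s hs => if_neg (by omega)]
  simp

lemma repValue_self (H : ℕ → Ω → ℝ) (q : Ω → ℝ) :
    repValue g T T H q = fun ω => (q ω : EReal) := by
  simp [repValue, shareVal_zero]

lemma inLbar_repValue (hFmono : Monotone F) (hgL : ∀ t < T, MapsLbar μ (F t) (F (t + 1)) (g t))
    {t : ℕ} (ht : t ≤ T) {H : ℕ → Ω → ℝ} (hH : ∀ s ≤ T, InLpp μ (F s) (H s)) {q : Ω → ℝ}
    (hq : InLpp μ (F t) q) : InLbar μ (F t) (repValue g T t H q) :=
  inLbar_shareVal_sub hFmono hgL ht fun s _ hsT => by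
    by_cases hst : s = t
    · subst hst
      simpa using hq
    · simpa [hst] using hH s hsT

lemma repValue_ae_eq_on (hFmono : Monotone F)
    (hgL : ∀ t < T, MapsLbar μ (F t) (F (t + 1)) (g t)) (hgae : ∀ t < T, AECongr μ (g t))
    (hgconc : ∀ t < T, CondConcave μ (F t) (F (t + 1)) (g t)) {t : ℕ} (ht : t ≤ T)
    {H : ℕ → Ω → ℝ} (hH : ∀ s ≤ T, InLpp μ (F s) (H s)) {B : Set Ω} (hB : MeasurableSet[F t] B)
    {q q' : Ω → ℝ} (hq : InLpp μ (F t) q) (hq' : InLpp μ (F t) q')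
    (heq : ∀ᵐ ω ∂μ, ω ∈ B → q ω = q' ω) :
    ∀ᵐ ω ∂μ, ω ∈ B → repValue g T t H q ω = repValue g T t H q' ω := by
  rcases ht.lt_or_eq with ht | rfl
  · rw [repValue_of_lt ht, repValue_of_lt ht]
    exact persp_ae_eq_on (hgconc t ht) (hgae t ht) (hFmono t.le_succ) hB hq hq'
      (inLbar_shareVal_sub hFmono hgL ht fun s _ hsT => hH s hsT) heq
  · rw [repValue_self, repValue_self]
    exact heq.mono fun ω h hω => by simp only [h hω]

lemma repValue_mono (hFmono : Monotone F)
    (hgL : ∀ t < T, MapsLbar μ (F t) (F (t + 1)) (g t)) (hgae : ∀ t < T, AECongr μ (g t))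
    (hgconc : ∀ t < T, CondConcave μ (F t) (F (t + 1)) (g t))
    (hg0 : ∀ t < T, g t (fun _ => 0) =ᵐ[μ] fun _ => 0) {t : ℕ} (ht : t ≤ T)
    {H : ℕ → Ω → ℝ} (hH : ∀ s ≤ T, InLpp μ (F s) (H s)) {q q' : Ω → ℝ} (hq : InLpp μ (F t) q)
    (hq' : InLpp μ (F t) q') (hle : q ≤ᵐ[μ] q') :
    repValue g T t H q ≤ᵐ[μ] repValue g T t H q' := by
  rcases ht.lt_or_eq with ht | rfl
  · rw [repValue_of_lt ht, repValue_of_lt ht]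
    exact persp_mono_left (hgconc t ht) (hgae t ht) (hg0 t ht) (hFmono t.le_succ) hq hq' hle
      (inLbar_shareVal_sub hFmono hgL ht fun s _ hsT => hH s hsT)
  · rw [repValue_self, repValue_self]
    exact hle.mono fun ω h => EReal.coe_le_coe_iff.2 h

lemma limsup_repValue_le (hFmono : Monotone F)
    (hgL : ∀ t < T, MapsLbar μ (F t) (F (t + 1)) (g t))
    (hgusc : ∀ t < T, SeqUSCOnLbar μ (F (t + 1)) (g t)) {t : ℕ} (ht : t ≤ T)
    {H : ℕ → Ω → ℝ} (hH : ∀ s ≤ T, InLpp μ (F s) (H s)) {qk : ℕ → Ω → ℝ} {q : Ω → ℝ}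
    (hqk : ∀ k, InLpp μ (F t) (qk k)) (hq : InLpp μ (F t) q)
    (hlim : ∀ᵐ ω ∂μ, Tendsto (fun k => qk k ω) atTop (𝓝 (q ω))) :
    ∀ᵐ ω ∂μ, limsup (fun k => repValue g T t H (qk k) ω) atTop ≤ repValue g T t H q ω := by
  rcases ht.lt_or_eq with ht | rfl
  · simp only [repValue_of_lt ht]
    exact limsup_persp_le (hgusc t ht) (hFmono t.le_succ) hqk hq
      (inLbar_shareVal_sub hFmono hgL ht fun s _ hsT => hH s hsT) hlim
  · simp only [repValue_self]
    exact hlim.mono fun ω h => (Tendsto.limsup_eq (EReal.tendsto_coe.2 h)).le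

variable [Fintype ι] [Nonempty ι]

lemma isAlloc_proportional (hFmono : Monotone F) {t : ℕ} {h : ι → Ω → ℝ}
    (hh : ∀ a, InLpp μ (F t) (h a)) {H : ℕ → Ω → ℝ} (hH : ∀ s ≤ T, InLpp μ (F s) (H s)) :
    IsAlloc μ F T t H fun s a ω => h a ω / (∑ b, h b ω) * H s ω := by
  have hsum := InLpp.sum Finset.univ_nonempty fun a _ => hh a
  intro s hts hsT
  refine ⟨fun a => ⟨(((hh a).1.div hsum.1).mono (hFmono hts.le) le_rfl).mul (hH s hsT).1, ?_⟩, ?_⟩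
  · filter_upwards [(hh a).2, hsum.2, (hH s hsT).2] with ω h1 h2 h3
    positivity
  · filter_upwards [hsum.2] with ω h
    rw [← Finset.sum_mul, ← Finset.sum_div, div_self h.ne', one_mul]

lemma sum_shareVal_le_repValue (hFmono : Monotone F)
    (hgL : ∀ t < T, MapsLbar μ (F t) (F (t + 1)) (g t)) (hgae : ∀ t < T, AECongr μ (g t))
    (hgmono : ∀ t < T, MonotoneOnLbar μ (F (t + 1)) (g t))
    (hgconc : ∀ t < T, CondConcave μ (F t) (F (t + 1)) (g t)) {t : ℕ} (ht : t ≤ T)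
    {H : ℕ → Ω → ℝ} (hH : ∀ s ≤ T, InLpp μ (F s) (H s)) {h : ι → Ω → ℝ}
    (hh : ∀ a, InLpp μ (F t) (h a)) {x : ℕ → ι → Ω → ℝ} (hx : IsAlloc μ F T t H x) :
    (fun ω => ∑ a, shareVal g T (fun s a => if s = t then h a else x s a) (T - t) a ω) ≤ᵐ[μ]
      repValue g T t H fun ω => ∑ a, h a ω := by
  have hsum := InLpp.sum Finset.univ_nonempty fun a _ => hh a
  refine sum_shareVal_le hFmono hgL hgae hgmono hgconc
    (H := fun s => if s = t then fun ω => ∑ a, h a ω else H s) (fun s hsT => ?_) (T - t)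
    (Nat.sub_le T t) fun s hs hsT => ?_
  · split_ifs with hst
    exacts [hst ▸ hsum, hH s hsT]
  · by_cases hst : s = t
    · subst hst
      simpa using hh
    · simp only [hst, if_false]
      exact hx s (by omega) hsT

lemma sum_shareVal_proportional (hgae : ∀ t < T, AECongr μ (g t)) {t : ℕ} (ht : t ≤ T)
    {H : ℕ → Ω → ℝ} {h : ι → Ω → ℝ} (hh : ∀ a, ∀ᵐ ω ∂μ, 0 < h a ω) {w : ℕ → ι → Ω → ℝ}
    (hw_t : ∀ a, w t a = h a)
    (hw : ∀ s, t < s → ∀ a, w s a = fun ω => h a ω / (∑ b, h b ω) * H s ω) :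
    (fun ω => ∑ a, shareVal g T w (T - t) a ω) =ᵐ[μ] repValue g T t H fun ω => ∑ a, h a ω := by
  have hpos : ∀ᵐ ω ∂μ, ∀ a, 0 < h a ω := eventually_all.2 hh
  have hsum_pos : ∀ᵐ ω ∂μ, 0 < ∑ b, h b ω :=
    hpos.mono fun ω hω => Finset.sum_pos (fun b _ => hω b) Finset.univ_nonempty
  have hshare : ∀ a, shareVal g T w (T - t) a =ᵐ[μ]
      fun ω => ((h a ω / ∑ b, h b ω : ℝ) : EReal) * repValue g T t H (fun ω => ∑ b, h b ω) ω :=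
    fun a => shareVal_ae_eq_mul hgae ((hpos.and hsum_pos).mono fun ω hω =>
      (div_pos (hω.1 a) hω.2).ne') (T - t) (Nat.sub_le T t) fun s hs _ => by
      by_cases hst : s = t
      · subst hst
        filter_upwards [hsum_pos] with ω hω
        simp [hw_t, hω.ne']
      · simp only [hw s (by omega) a, hst, if_false]
        rfl
  filter_upwards [eventually_all.2 hshare, hpos, hsum_pos] with ω hω hpos hsum
  rw [Finset.sum_congr rfl fun a _ => hω a, ← EReal.coe_finset_sum_mul_of_nonneg _
    fun a _ => (div_pos (hpos a) hsum).le, ← Finset.sum_div, div_self hsum.ne', EReal.coe_one,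
    one_mul]

end RiskSharing

theorem risk_sharing_general [Fintype ι] [Nonempty ι] {m : MeasurableSpace Ω}
    {μ : Measure Ω}
    (T : ℕ) (F : ℕ → MeasurableSpace Ω)
    (hFmono : Monotone F)
    (g : ℕ → (Ω → EReal) → Ω → EReal)
    -- g_t maps L̲⁰_{t+1} into L̲⁰_t and respects a.e. equality
    (hgL : ∀ t < T, ∀ y : Ω → EReal, InLbar μ (F (t + 1)) y →
      Measurable[F t] (g t y) ∧ ∀ᵐ ω ∂μ, g t y ω < ⊤)
    (hgae : ∀ t < T, ∀ y y' : Ω → EReal, y =ᵐ[μ] y' → g t y =ᵐ[μ] g t y')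
    -- g_t is increasing
    (hgmono : ∀ t < T, ∀ y y' : Ω → EReal, InLbar μ (F (t + 1)) y →
      InLbar μ (F (t + 1)) y' → y ≤ᵐ[μ] y' → g t y ≤ᵐ[μ] g t y')
    -- g_t is 𝓕ₜ-concave
    (hgconc : ∀ t < T, ∀ y y' : Ω → EReal, InLbar μ (F (t + 1)) y →
      InLbar μ (F (t + 1)) y' →
      ∀ lam : Ω → ℝ, Measurable[F t] lam → (∀ᵐ ω ∂μ, 0 ≤ lam ω ∧ lam ω ≤ 1) →
      ∀ᵐ ω ∂μ, (lam ω : EReal) * g t y ω + ((1 - lam ω : ℝ) : EReal) * g t y' ω ≤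
        g t (fun ω' => (lam ω' : EReal) * y ω' +
          ((1 - lam ω' : ℝ) : EReal) * y' ω') ω)
    -- g_t is sequentially upper semi-continuous
    (hgusc : ∀ t < T, ∀ (yk : ℕ → Ω → EReal) (y₀ : Ω → EReal),
      (∀ k, InLbar μ (F (t + 1)) (yk k)) → InLbar μ (F (t + 1)) y₀ →
      (∀ᵐ ω ∂μ, Filter.Tendsto (fun k => yk k ω) Filter.atTop (nhds (y₀ ω))) →
      ∀ᵐ ω ∂μ, Filter.limsup (fun k => g t (yk k) ω) Filter.atTop ≤ g t y₀ ω)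
    -- g_t(0) = 0
    (hg0 : ∀ t < T, g t (fun _ => (0 : EReal)) =ᵐ[μ] fun _ => (0 : EReal))
    -- the endowment processes H^a ∈ L⁰_{s,++}
    (Ha : ℕ → ι → Ω → ℝ)
    (hHa : ∀ s ≤ T, ∀ a, Measurable[F s] (Ha s a) ∧ ∀ᵐ ω ∂μ, 0 < Ha s a ω)
    -- the value functions y_t, given by an essential supremum over allocations
    (Y : ℕ → (ι → Ω → ℝ) → Ω → EReal)
    (hY : ∀ t ≤ T, ∀ h : ι → Ω → ℝ,
      (∀ a, Measurable[F t] (h a) ∧ ∀ᵐ ω ∂μ, 0 < h a ω) →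
      Measurable[F t] (Y t h) ∧
      (∀ x : ℕ → ι → Ω → ℝ,
        IsAlloc μ F T t (fun s ω => ∑ a, Ha s a ω) x →
        ∀ᵐ ω ∂μ, (∑ a, shareVal g T (fun s a => if s = t then h a else x s a)
          (T - t) a ω) ≤ Y t h ω) ∧
      (∀ b : Ω → EReal, Measurable[F t] b →
        (∀ x : ℕ → ι → Ω → ℝ,
          IsAlloc μ F T t (fun s ω => ∑ a, Ha s a ω) x →
          ∀ᵐ ω ∂μ, (∑ a, shareVal g T (fun s a => if s = t then h a else x s a)
            (T - t) a ω) ≤ b ω) →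
        ∀ᵐ ω ∂μ, Y t h ω ≤ b ω)) :
    -- (1) the proportional allocation x^{a,*}_s = (H^a_t / H_t) H_s is feasible and
    -- optimal for the problem started at t with initial endowments (H^a_t)
    (∀ t ≤ T,
      IsAlloc μ F T t (fun s ω => ∑ a, Ha s a ω)
        (fun s a ω => Ha t a ω / (∑ b, Ha t b ω) * ∑ b, Ha s b ω) ∧
      Y t (Ha t) =ᵐ[μ] fun ω =>
        ∑ a, shareVal g T
          (fun s a ω' => if s = t then Ha t a ω' else
            Ha t a ω' / (∑ b, Ha t b ω') * ∑ b, Ha s b ω') (T - t) a ω) ∧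
    -- (2) y_t is 𝓕ₜ-stable
    (∀ t ≤ T, ∀ (A : ℕ → Set Ω), IsCondPartition μ (F t) A →
      ∀ (hk : ℕ → ι → Ω → ℝ) (h₀ : ι → Ω → ℝ),
      (∀ k a, Measurable[F t] (hk k a) ∧ ∀ᵐ ω ∂μ, 0 < hk k a ω) →
      (∀ a, Measurable[F t] (h₀ a) ∧ ∀ᵐ ω ∂μ, 0 < h₀ a ω) →
      (∀ k, ∀ᵐ ω ∂μ, ω ∈ A k → ∀ a, h₀ a ω = hk k a ω) →
      ∀ k, ∀ᵐ ω ∂μ, ω ∈ A k → Y t h₀ ω = Y t (hk k) ω) ∧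
    -- y_t is increasing
    (∀ t ≤ T, ∀ h h' : ι → Ω → ℝ,
      (∀ a, Measurable[F t] (h a) ∧ ∀ᵐ ω ∂μ, 0 < h a ω) →
      (∀ a, Measurable[F t] (h' a) ∧ ∀ᵐ ω ∂μ, 0 < h' a ω) →
      (∀ a, h a ≤ᵐ[μ] h' a) → Y t h ≤ᵐ[μ] Y t h') ∧
    -- y_t is sequentially upper semi-continuous
    (∀ t ≤ T, ∀ (hk : ℕ → ι → Ω → ℝ) (h₀ : ι → Ω → ℝ),
      (∀ k a, Measurable[F t] (hk k a) ∧ ∀ᵐ ω ∂μ, 0 < hk k a ω) →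
      (∀ a, Measurable[F t] (h₀ a) ∧ ∀ᵐ ω ∂μ, 0 < h₀ a ω) →
      (∀ a, ∀ᵐ ω ∂μ, Filter.Tendsto (fun k => hk k a ω) Filter.atTop
        (nhds (h₀ a ω))) →
      ∀ᵐ ω ∂μ, Filter.limsup (fun k => Y t (hk k) ω) Filter.atTop ≤ Y t h₀ ω) := by
  have hsum : ∀ t (h : ι → Ω → ℝ), (∀ a, InLpp μ (F t) (h a)) →
      InLpp μ (F t) fun ω => ∑ a, h a ω :=
    fun t h hh => InLpp.sum Finset.univ_nonempty fun a _ => hh a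
  have hH : ∀ s ≤ T, InLpp μ (F s) fun ω => ∑ a, Ha s a ω := fun s hs => hsum s _ (hHa s hs)
  have hval : ∀ t ≤ T, ∀ h : ι → Ω → ℝ, (∀ a, InLpp μ (F t) (h a)) →
      Y t h =ᵐ[μ] repValue g T t (fun s ω => ∑ a, Ha s a ω) fun ω => ∑ a, h a ω := by
    intro t ht h hh
    obtain ⟨-, hub, hlub⟩ := hY t ht h hh
    exact ae_eq_of_essSup_attained hub hlub (inLbar_repValue hFmono hgL ht hH (hsum t h hh)).1
      (fun x hx => sum_shareVal_le_repValue hFmono hgL hgae hgmono hgconc ht hH hh hx)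
      (isAlloc_proportional hFmono hh hH)
      (sum_shareVal_proportional hgae ht (fun a => (hh a).2) (fun a => if_pos rfl)
        fun s hs a => if_neg hs.ne').ge
  refine ⟨fun t ht => ⟨isAlloc_proportional hFmono (hHa t ht) hH, (hval t ht _ (hHa t ht)).trans
    (sum_shareVal_proportional hgae ht (fun a => (hHa t ht a).2)
      (fun a => funext fun _ => if_pos rfl) fun s hs a => funext fun _ => if_neg hs.ne').symm⟩,
    ?_, ?_, ?_⟩
  · intro t ht A hA hk h₀ hkpos h₀pos hagree k
    filter_upwards [hval t ht h₀ h₀pos, hval t ht (hk k) (hkpos k),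
      repValue_ae_eq_on hFmono hgL hgae hgconc ht hH (hA.1 k) (hsum t _ h₀pos) (hsum t _ (hkpos k))
        ((hagree k).mono fun ω h hω => Finset.sum_congr rfl fun a _ => h hω a)] with ω e₀ eₖ e hω
    rw [e₀, eₖ, e hω]
  · intro t ht h h' hh hh' hle
    filter_upwards [hval t ht h hh, hval t ht h' hh',
      repValue_mono hFmono hgL hgae hgconc hg0 ht hH (hsum t h hh) (hsum t h' hh')
        ((eventually_all.2 hle).mono fun ω h => Finset.sum_le_sum fun a _ => h a)] with ω e e' hle
    rw [e, e']
    exact hle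
  · intro t ht hk h₀ hkpos h₀pos htend
    filter_upwards [ae_all_iff.2 fun k => hval t ht (hk k) (hkpos k), hval t ht h₀ h₀pos,
      limsup_repValue_le hFmono hgL hgusc ht hH (fun k => hsum t _ (hkpos k)) (hsum t _ h₀pos)
        ((eventually_all.2 htend).mono fun ω h => tendsto_finsetSum _ fun a _ => h a)]
      with ω eₖ e₀ hlim
    simp only [eₖ, e₀]
    exact hlim

/-- **Proposition 4.3 (wealth-dependent dynamic risk sharing).** The optimal risk
sharing problem admits the proportional optimal solution
`x^{a,*}_s = (H^a_t / H_t) · H_s`, and the value function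
`y_t : L⁰ₜ((0,∞)^{|𝔸|}) → L̲⁰ₜ` is `𝓕ₜ`-stable, increasing and sequentially upper
semi-continuous for `t = 0, …, T`. -/
theorem risk_sharing [Fintype ι] [Nonempty ι] {m : MeasurableSpace Ω}
    {μ : Measure Ω} [IsProbabilityMeasure μ]
    (T : ℕ) (F : ℕ → MeasurableSpace Ω)
    (hFmono : Monotone F) (hFm : ∀ t, F t ≤ m) (hFT : F T = m)
    (g : ℕ → (Ω → EReal) → Ω → EReal)
    -- g_t maps L̲⁰_{t+1} into L̲⁰_t and respects a.e. equality
    (hgL : ∀ t < T, ∀ y : Ω → EReal, InLbar μ (F (t + 1)) y →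
      Measurable[F t] (g t y) ∧ ∀ᵐ ω ∂μ, g t y ω < ⊤)
    (hgae : ∀ t < T, ∀ y y' : Ω → EReal, y =ᵐ[μ] y' → g t y =ᵐ[μ] g t y')
    -- g_t is increasing
    (hgmono : ∀ t < T, ∀ y y' : Ω → EReal, InLbar μ (F (t + 1)) y →
      InLbar μ (F (t + 1)) y' → y ≤ᵐ[μ] y' → g t y ≤ᵐ[μ] g t y')
    -- g_t is 𝓕ₜ-concave
    (hgconc : ∀ t < T, ∀ y y' : Ω → EReal, InLbar μ (F (t + 1)) y →
      InLbar μ (F (t + 1)) y' →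
      ∀ lam : Ω → ℝ, Measurable[F t] lam → (∀ᵐ ω ∂μ, 0 ≤ lam ω ∧ lam ω ≤ 1) →
      ∀ᵐ ω ∂μ, (lam ω : EReal) * g t y ω + ((1 - lam ω : ℝ) : EReal) * g t y' ω ≤
        g t (fun ω' => (lam ω' : EReal) * y ω' +
          ((1 - lam ω' : ℝ) : EReal) * y' ω') ω)
    -- g_t is sequentially upper semi-continuous
    (hgusc : ∀ t < T, ∀ (yk : ℕ → Ω → EReal) (y₀ : Ω → EReal),
      (∀ k, InLbar μ (F (t + 1)) (yk k)) → InLbar μ (F (t + 1)) y₀ →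
      (∀ᵐ ω ∂μ, Filter.Tendsto (fun k => yk k ω) Filter.atTop (nhds (y₀ ω))) →
      ∀ᵐ ω ∂μ, Filter.limsup (fun k => g t (yk k) ω) Filter.atTop ≤ g t y₀ ω)
    -- g_t(0) = 0
    (hg0 : ∀ t < T, g t (fun _ => (0 : EReal)) =ᵐ[μ] fun _ => (0 : EReal))
    -- the endowment processes H^a ∈ L⁰_{s,++}
    (Ha : ℕ → ι → Ω → ℝ)
    (hHa : ∀ s ≤ T, ∀ a, Measurable[F s] (Ha s a) ∧ ∀ᵐ ω ∂μ, 0 < Ha s a ω)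
    -- the value functions y_t, given by an essential supremum over allocations
    (Y : ℕ → (ι → Ω → ℝ) → Ω → EReal)
    (hY : ∀ t ≤ T, ∀ h : ι → Ω → ℝ,
      (∀ a, Measurable[F t] (h a) ∧ ∀ᵐ ω ∂μ, 0 < h a ω) →
      Measurable[F t] (Y t h) ∧
      (∀ x : ℕ → ι → Ω → ℝ,
        IsAlloc μ F T t (fun s ω => ∑ a, Ha s a ω) x →
        ∀ᵐ ω ∂μ, (∑ a, shareVal g T (fun s a => if s = t then h a else x s a)
          (T - t) a ω) ≤ Y t h ω) ∧
      (∀ b : Ω → EReal, Measurable[F t] b →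
        (∀ x : ℕ → ι → Ω → ℝ,
          IsAlloc μ F T t (fun s ω => ∑ a, Ha s a ω) x →
          ∀ᵐ ω ∂μ, (∑ a, shareVal g T (fun s a => if s = t then h a else x s a)
            (T - t) a ω) ≤ b ω) →
        ∀ᵐ ω ∂μ, Y t h ω ≤ b ω)) :
    -- (1) the proportional allocation x^{a,*}_s = (H^a_t / H_t) H_s is feasible and
    -- optimal for the problem started at t with initial endowments (H^a_t)
    (∀ t ≤ T,
      IsAlloc μ F T t (fun s ω => ∑ a, Ha s a ω)
        (fun s a ω => Ha t a ω / (∑ b, Ha t b ω) * ∑ b, Ha s b ω) ∧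
      Y t (Ha t) =ᵐ[μ] fun ω =>
        ∑ a, shareVal g T
          (fun s a ω' => if s = t then Ha t a ω' else
            Ha t a ω' / (∑ b, Ha t b ω') * ∑ b, Ha s b ω') (T - t) a ω) ∧
    -- (2) y_t is 𝓕ₜ-stable
    (∀ t ≤ T, ∀ (A : ℕ → Set Ω), IsCondPartition μ (F t) A →
      ∀ (hk : ℕ → ι → Ω → ℝ) (h₀ : ι → Ω → ℝ),
      (∀ k a, Measurable[F t] (hk k a) ∧ ∀ᵐ ω ∂μ, 0 < hk k a ω) →
      (∀ a, Measurable[F t] (h₀ a) ∧ ∀ᵐ ω ∂μ, 0 < h₀ a ω) →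
      (∀ k, ∀ᵐ ω ∂μ, ω ∈ A k → ∀ a, h₀ a ω = hk k a ω) →
      ∀ k, ∀ᵐ ω ∂μ, ω ∈ A k → Y t h₀ ω = Y t (hk k) ω) ∧
    -- y_t is increasing
    (∀ t ≤ T, ∀ h h' : ι → Ω → ℝ,
      (∀ a, Measurable[F t] (h a) ∧ ∀ᵐ ω ∂μ, 0 < h a ω) →
      (∀ a, Measurable[F t] (h' a) ∧ ∀ᵐ ω ∂μ, 0 < h' a ω) →
      (∀ a, h a ≤ᵐ[μ] h' a) → Y t h ≤ᵐ[μ] Y t h') ∧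
    -- y_t is sequentially upper semi-continuous
    (∀ t ≤ T, ∀ (hk : ℕ → ι → Ω → ℝ) (h₀ : ι → Ω → ℝ),
      (∀ k a, Measurable[F t] (hk k a) ∧ ∀ᵐ ω ∂μ, 0 < hk k a ω) →
      (∀ a, Measurable[F t] (h₀ a) ∧ ∀ᵐ ω ∂μ, 0 < h₀ a ω) →
      (∀ a, ∀ᵐ ω ∂μ, Filter.Tendsto (fun k => hk k a ω) Filter.atTop
        (nhds (h₀ a ω))) →
      ∀ᵐ ω ∂μ, Filter.limsup (fun k => Y t (hk k) ω) Filter.atTop ≤ Y t h₀ ω) :=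
  risk_sharing_general (m := m) T F hFmono g hgL hgae hgmono hgconc hgusc hg0 Ha hHa Y hY

end CondPaper
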